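/- arXiv:2307.08212 — 4 statements merged into one kernel-verified Lean document; each statement's English description precedes it below -/
import Mathlib

section
/- Suppose there exists a real ε ∈ [0, 1/2) such that for all y ∈ 𝒴 and all x ∈ 𝒳 one has |π_X^y(x)/π_X(x) − 1| ≤ ε. Then for every function f : 𝒳 × 𝒴 → ℝ, Var f ≤ (1 + ε/(1−2ε)) · (E[Var_X f] + E[Var_Y f]). -/
open scoped BigOperators Classical

noncomputable section

/-- Expectation of `f` under the (finitely supported) density `p`. -/
def pmean {α : Type*} [Fintype α] (p f : α → ℝ) : ℝ := ∑ a, p a * f a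

/-- Variance of `f` under the density `p`. -/
def pvar {α : Type*} [Fintype α] (p f : α → ℝ) : ℝ :=
  pmean p (fun a => (f a - pmean p f) ^ 2)

/-- Marginal on the first coordinate. -/
def margX {X Y : Type*} [Fintype X] [Fintype Y] (π : X × Y → ℝ) : X → ℝ :=
  fun x => ∑ y, π (x, y)

/-- Marginal on the second coordinate. -/
def margY {X Y : Type*} [Fintype X] [Fintype Y] (π : X × Y → ℝ) : Y → ℝ :=
  fun y => ∑ x, π (x, y)

/-- Conditional distribution of the first coordinate given the second equals `y`. -/
def condX {X Y : Type*} [Fintype X] [Fintype Y] (π : X × Y → ℝ) (y : Y) : X → ℝ :=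
  fun x => π (x, y) / margY π y

/-- Conditional distribution of the second coordinate given the first equals `x`. -/
def condY {X Y : Type*} [Fintype X] [Fintype Y] (π : X × Y → ℝ) (x : X) : Y → ℝ :=
  fun y => π (x, y) / margX π x

/-! With `F = f - E f`, let `g y = E[F | Y = y]` and `h x = E[F | X = x]`. By the law of
total variance the right-hand side is `c · (2 Var f - (E g² + E h²))`, so it suffices to show
`E g² + E h² ≤ (1 + ε) Var f`. Now `E g² + E h² = E[(g + h) F]`, which by Cauchy–Schwarz is at
most `√(E (g + h)²) · √(Var f)`. The only cross term of `E (g + h)²` is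
`E[h(X) g(Y)] = Σ (π - π_X ⊗ π_Y) h g`, because `g` is centred under `π_Y`; the hypothesis says
`|π - π_X ⊗ π_Y| ≤ ε π_X ⊗ π_Y`, so this is at most `ε E|h| E|g| ≤ ε (E h² + E g²) / 2`. -/

section Moments

variable {α : Type*} [Fintype α] (p : α → ℝ)

lemma pmean_add (f g : α → ℝ) : pmean p (fun a => f a + g a) = pmean p f + pmean p g := by
  simp only [pmean, mul_add, Finset.sum_add_distrib]

lemma pmean_sub (f g : α → ℝ) : pmean p (fun a => f a - g a) = pmean p f - pmean p g := by
  simp only [pmean, mul_sub, Finset.sum_sub_distrib]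

lemma pmean_const_mul (c : ℝ) (f : α → ℝ) : pmean p (fun a => c * f a) = c * pmean p f := by
  simp only [pmean, Finset.mul_sum, mul_left_comm]

lemma pmean_const {p : α → ℝ} (hp : ∑ a, p a = 1) (c : ℝ) : pmean p (fun _ => c) = c := by
  simp only [pmean, ← Finset.sum_mul, hp, one_mul]

lemma pmean_nonneg {p : α → ℝ} (hp : ∀ a, 0 ≤ p a) {f : α → ℝ} (hf : ∀ a, 0 ≤ f a) :
    0 ≤ pmean p f :=
  Finset.sum_nonneg fun a _ => mul_nonneg (hp a) (hf a)

lemma pmean_sub_const {p : α → ℝ} (hp : ∑ a, p a = 1) (f : α → ℝ) (c : ℝ) :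
    pmean p (fun a => f a - c) = pmean p f - c := by
  rw [pmean_sub, pmean_const hp]

lemma pvar_sub_const {p : α → ℝ} (hp : ∑ a, p a = 1) (f : α → ℝ) (c : ℝ) :
    pvar p (fun a => f a - c) = pvar p f := by
  simp only [pvar, pmean_sub_const hp, sub_sub_sub_cancel_right]

lemma pvar_eq_pmean_sq_sub_sq {p : α → ℝ} (hp : ∑ a, p a = 1) (f : α → ℝ) :
    pvar p f = pmean p (fun a => f a ^ 2) - pmean p f ^ 2 := by
  have hexpand : (fun a => (f a - pmean p f) ^ 2) =
      fun a => f a ^ 2 - (2 * pmean p f * f a - pmean p f ^ 2) := by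
    ext a; ring
  rw [pvar, hexpand, pmean_sub, pmean_sub, pmean_const_mul, pmean_const hp]
  ring

lemma sq_pmean_le_pmean_sq {p : α → ℝ} (hp0 : ∀ a, 0 ≤ p a) (hp1 : ∑ a, p a = 1)
    (f : α → ℝ) : pmean p f ^ 2 ≤ pmean p (fun a => f a ^ 2) := by
  have := pmean_nonneg hp0 fun a => sq_nonneg (f a - pmean p f)
  rw [← pvar, pvar_eq_pmean_sq_sub_sq hp1] at this
  linarith

lemma sq_pmean_mul_le {p : α → ℝ} (hp : ∀ a, 0 ≤ p a) (u v : α → ℝ) :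
    pmean p (fun a => u a * v a) ^ 2 ≤
      pmean p (fun a => u a ^ 2) * pmean p (fun a => v a ^ 2) :=
  Finset.sum_sq_le_sum_mul_sum_of_sq_le_mul _
    (fun a _ => mul_nonneg (hp a) (sq_nonneg _)) (fun a _ => mul_nonneg (hp a) (sq_nonneg _))
    (fun a _ => le_of_eq (by ring))

end Moments

section Joint

variable {X Y : Type*} [Fintype X] [Fintype Y] (π : X × Y → ℝ)

def condMeanX (F : X × Y → ℝ) (y : Y) : ℝ := pmean (condX π y) (fun x => F (x, y))

def condMeanY (F : X × Y → ℝ) (x : X) : ℝ := pmean (condY π x) (fun y => F (x, y))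

lemma sum_margX : ∑ x, margX π x = ∑ z, π z := (Fintype.sum_prod_type _).symm

lemma sum_margY : ∑ y, margY π y = ∑ z, π z := (Fintype.sum_prod_type_right _).symm

lemma pmean_comp_fst (u : X → ℝ) : pmean π (fun z => u z.1) = pmean (margX π) u := by
  simp only [pmean, margX, Fintype.sum_prod_type, Finset.sum_mul]

lemma pmean_comp_snd (v : Y → ℝ) : pmean π (fun z => v z.2) = pmean (margY π) v := by
  simp only [pmean, margY, Fintype.sum_prod_type_right, Finset.sum_mul]

lemma pmean_comp_swap (F : X × Y → ℝ) :
    pmean (π ∘ Prod.swap) (fun w => F w.swap) = pmean π F :=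
  Equiv.sum_comp (Equiv.prodComm Y X) fun z => π z * F z

variable {π}

lemma margY_mul_condX {y : Y} (hy : margY π y ≠ 0) (x : X) :
    margY π y * condX π y x = π (x, y) :=
  mul_div_cancel₀ _ hy

lemma sum_condX {y : Y} (hy : margY π y ≠ 0) : ∑ x, condX π y x = 1 := by
  simp only [condX, ← Finset.sum_div]
  exact div_self hy

lemma condX_div_margX_sub_one {x : X} {y : Y} (hx : margX π x ≠ 0) (hy : margY π y ≠ 0) :
    condX π y x / margX π x - 1 =
      (π (x, y) - margX π x * margY π y) / (margX π x * margY π y) := by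
  unfold condX
  field_simp

lemma pmean_margY_condMeanX (hY : ∀ y, margY π y ≠ 0) (F : X × Y → ℝ) :
    pmean (margY π) (condMeanX π F) = pmean π F := by
  simp only [pmean, condMeanX, Finset.mul_sum, ← mul_assoc, margY_mul_condX (hY _),
    Fintype.sum_prod_type_right]

lemma pmean_margY_pvar_condX (hY : ∀ y, margY π y ≠ 0) (F : X × Y → ℝ) :
    pmean (margY π) (fun y => pvar (condX π y) (fun x => F (x, y))) =
      pmean π (fun z => F z ^ 2) - pmean (margY π) (fun y => condMeanX π F y ^ 2) := by
  simp only [pvar_eq_pmean_sq_sub_sq (sum_condX (hY _))]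
  rw [pmean_sub, ← pmean_margY_condMeanX hY]
  rfl

lemma pmean_margX_pvar_condY (hX : ∀ x, margX π x ≠ 0) (F : X × Y → ℝ) :
    pmean (margX π) (fun x => pvar (condY π x) (fun y => F (x, y))) =
      pmean π (fun z => F z ^ 2) - pmean (margX π) (fun x => condMeanY π F x ^ 2) := by
  rw [← pmean_comp_swap π]
  exact pmean_margY_pvar_condX (π := π ∘ Prod.swap) hX fun w => F w.swap

lemma pmean_condMeanX_mul (hY : ∀ y, margY π y ≠ 0) (F : X × Y → ℝ) :
    pmean π (fun z => condMeanX π F z.2 * F z) =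
      pmean (margY π) (fun y => condMeanX π F y ^ 2) := by
  rw [← pmean_margY_condMeanX hY]
  congr 1
  ext y
  simp only [condMeanX, pmean_const_mul, sq]

lemma pmean_condMeanY_mul (hX : ∀ x, margX π x ≠ 0) (F : X × Y → ℝ) :
    pmean π (fun z => condMeanY π F z.1 * F z) =
      pmean (margX π) (fun x => condMeanY π F x ^ 2) := by
  rw [← pmean_comp_swap π]
  exact pmean_condMeanX_mul (π := π ∘ Prod.swap) hX fun w => F w.swap

end Joint

lemma pmean_mul_le_of_abs_sub_mul_le {X Y : Type*} [Fintype X] [Fintype Y] {π : X × Y → ℝ}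
    {p : X → ℝ} {q : Y → ℝ} (hp0 : ∀ x, 0 ≤ p x) (hp1 : ∑ x, p x = 1)
    (hq0 : ∀ y, 0 ≤ q y) (hq1 : ∑ y, q y = 1) {ε : ℝ} (hε : 0 ≤ ε)
    (hπ : ∀ x y, |π (x, y) - p x * q y| ≤ ε * (p x * q y)) (u : X → ℝ) {v : Y → ℝ}
    (hv : pmean q v = 0) :
    pmean π (fun z => u z.1 * v z.2) ≤
      ε / 2 * (pmean p (fun x => u x ^ 2) + pmean q (fun y => v y ^ 2)) := by
  have hprod : ∑ x, ∑ y, p x * q y * (u x * v y) = pmean p u * pmean q v := by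
    simp only [pmean, Finset.sum_mul_sum, mul_mul_mul_comm]
  have hcross : pmean π (fun z => u z.1 * v z.2) ≤
      ε * (pmean p (fun x => |u x|) * pmean q (fun y => |v y|)) :=
    calc pmean π (fun z => u z.1 * v z.2)
        = ∑ x, ∑ y, (π (x, y) - p x * q y) * (u x * v y) := by
          simp only [sub_mul, Finset.sum_sub_distrib]
          rw [hprod, hv, mul_zero, sub_zero]
          exact Fintype.sum_prod_type _
      _ ≤ ∑ x, ∑ y, ε * (p x * q y) * (|u x| * |v y|) := by
          refine Finset.sum_le_sum fun x _ => Finset.sum_le_sum fun y _ => ?_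
          calc (π (x, y) - p x * q y) * (u x * v y)
              ≤ |π (x, y) - p x * q y| * (|u x| * |v y|) := by
                rw [← abs_mul, ← abs_mul]; exact le_abs_self _
            _ ≤ ε * (p x * q y) * (|u x| * |v y|) := by gcongr; exact hπ x y
      _ = ε * (pmean p (fun x => |u x|) * pmean q (fun y => |v y|)) := by
          simp only [pmean]
          rw [Finset.sum_mul_sum, Finset.mul_sum]
          refine Finset.sum_congr rfl fun x _ => ?_
          rw [Finset.mul_sum]
          exact Finset.sum_congr rfl fun y _ => by ring
  have hu := sq_pmean_le_pmean_sq hp0 hp1 fun x => |u x|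
  have hv := sq_pmean_le_pmean_sq hq0 hq1 fun y => |v y|
  simp only [sq_abs] at hu hv
  nlinarith [mul_nonneg hε (sq_nonneg
    (pmean p (fun x => |u x|) - pmean q (fun y => |v y|)))]

lemma le_mul_of_sq_le_mul_mul {S V c : ℝ} (hc : 0 ≤ c) (hV : 0 ≤ V)
    (h : S ^ 2 ≤ c * S * V) : S ≤ c * V := by
  rcases le_or_gt S 0 with hS | hS
  · exact hS.trans (mul_nonneg hc hV)
  · nlinarith

lemma le_one_add_div_mul_of_add_le {V G H ε : ℝ} (hV : 0 ≤ V)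
    (hε1 : ε < 1 / 2) (h : G + H ≤ (1 + ε) * V) :
    V ≤ (1 + ε / (1 - 2 * ε)) * ((V - G) + (V - H)) := by
  have h2ε : 0 < 1 - 2 * ε := by linarith
  rw [show 1 + ε / (1 - 2 * ε) = (1 - ε) / (1 - 2 * ε) by
      rw [eq_div_iff h2ε.ne', add_mul, div_mul_cancel₀ _ h2ε.ne']; ring,
    div_mul_eq_mul_div, le_div_iff₀ h2ε]
  nlinarith [mul_le_mul_of_nonneg_left h (by linarith : (0 : ℝ) ≤ 1 - ε),
    mul_nonneg hV (sq_nonneg ε)]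

lemma pmean_condMeanX_sq_add_pmean_condMeanY_sq_le {X Y : Type*} [Fintype X] [Fintype Y]
    {π : X × Y → ℝ} (hπ : ∀ z, 0 ≤ π z) (hsum : ∑ z, π z = 1)
    (hX : ∀ x, 0 < margX π x) (hY : ∀ y, 0 < margY π y) {ε : ℝ} (hε : 0 ≤ ε)
    (hprod : ∀ x y, |π (x, y) - margX π x * margY π y| ≤ ε * (margX π x * margY π y))
    {F : X × Y → ℝ} (hF : pmean π F = 0) :
    pmean (margY π) (fun y => condMeanX π F y ^ 2) +
        pmean (margX π) (fun x => condMeanY π F x ^ 2) ≤ (1 + ε) * pmean π (fun z => F z ^ 2) := by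
  set g := condMeanX π F
  set h := condMeanY π F
  set S := pmean (margY π) (fun y => g y ^ 2) + pmean (margX π) (fun x => h x ^ 2)
  have hS : pmean π (fun z => (g z.2 + h z.1) * F z) = S := by
    simp only [add_mul]
    rw [pmean_add, pmean_condMeanX_mul (fun y => (hY y).ne'),
      pmean_condMeanY_mul (fun x => (hX x).ne')]
  have hg : pmean (margY π) g = 0 := by
    rw [pmean_margY_condMeanX (fun y => (hY y).ne'), hF]
  have hcross : pmean π (fun z => h z.1 * g z.2) ≤ ε / 2 * S :=
    (pmean_mul_le_of_abs_sub_mul_le (fun x => (hX x).le) (by rw [sum_margX, hsum])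
      (fun y => (hY y).le) (by rw [sum_margY, hsum]) hε hprod h hg).trans_eq
      (by rw [add_comm])
  have hsq : pmean π (fun z => (g z.2 + h z.1) ^ 2) ≤ (1 + ε) * S := by
    have hexpand : (fun z : X × Y => (g z.2 + h z.1) ^ 2) =
        fun z => g z.2 ^ 2 + h z.1 ^ 2 + 2 * (h z.1 * g z.2) := by
      ext z; ring
    rw [hexpand, pmean_add, pmean_add, pmean_const_mul, pmean_comp_fst π fun x => h x ^ 2,
      pmean_comp_snd π fun y => g y ^ 2]
    linarith
  have hV : 0 ≤ pmean π (fun z => F z ^ 2) := pmean_nonneg hπ fun z => sq_nonneg (F z)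
  have hcs := sq_pmean_mul_le hπ (fun z => g z.2 + h z.1) F
  rw [hS] at hcs
  exact le_mul_of_sq_le_mul_mul (by linarith) hV
    (hcs.trans (mul_le_mul_of_nonneg_right hsq hV))

theorem var_factorization_weak_correlation_general
    {X Y : Type*} [Fintype X] [Fintype Y]
    (π : X × Y → ℝ) (hnn : ∀ z, 0 ≤ π z) (hsum : ∑ z, π z = 1)
    (hX : ∀ x, 0 < margX π x) (hY : ∀ y, 0 < margY π y)
    (ε : ℝ) (hε0 : 0 ≤ ε) (hε1 : ε < 1 / 2)
    (hcorr : ∀ y x, |condX π y x / margX π x - 1| ≤ ε)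
    (f : X × Y → ℝ) :
    pvar π f ≤ (1 + ε / (1 - 2 * ε)) *
      ((∑ y, margY π y * pvar (condX π y) (fun x => f (x, y))) +
       (∑ x, margX π x * pvar (condY π x) (fun y => f (x, y)))) := by
  have hprod : ∀ x y, |π (x, y) - margX π x * margY π y| ≤ ε * (margX π x * margY π y) := by
    intro x y
    have hxy := mul_pos (hX x) (hY y)
    have h := hcorr y x
    rwa [condX_div_margX_sub_one (hX x).ne' (hY y).ne', abs_div, abs_of_pos hxy,
      div_le_iff₀ hxy] at h
  set F : X × Y → ℝ := fun z => f z - pmean π f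
  have hF : pmean π F = 0 := by rw [pmean_sub_const hsum, sub_self]
  have hcondX : ∀ y,
      pvar (condX π y) (fun x => f (x, y)) = pvar (condX π y) (fun x => F (x, y)) :=
    fun y => (pvar_sub_const (sum_condX (hY y).ne') _ _).symm
  have hcondY : ∀ x,
      pvar (condY π x) (fun y => f (x, y)) = pvar (condY π x) (fun y => F (x, y)) :=
    fun x => (pvar_sub_const (sum_condX (π := π ∘ Prod.swap) (hX x).ne') _ _).symm
  simp only [hcondX, hcondY]
  change pmean π (fun z => F z ^ 2) ≤ _ * (pmean (margY π) _ + pmean (margX π) _)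
  rw [pmean_margY_pvar_condX (fun y => (hY y).ne'),
    pmean_margX_pvar_condY (fun x => (hX x).ne')]
  exact le_one_add_div_mul_of_add_le (pmean_nonneg hnn fun z => sq_nonneg (F z)) hε1
    (pmean_condMeanX_sq_add_pmean_condMeanY_sq_le hnn hsum hX hY hε0 hprod hF)

/-- **Two-variable factorization of variance with weak correlation.**
If `|π_X^y(x)/π_X(x) - 1| ≤ ε` for all `x, y` with `0 ≤ ε < 1/2`, then
`Var f ≤ (1 + ε/(1-2ε)) (E[Var_X f] + E[Var_Y f])`. -/
theorem var_factorization_weak_correlation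
    {X Y : Type*} [Fintype X] [Fintype Y] [Nonempty X] [Nonempty Y]
    (π : X × Y → ℝ) (hnn : ∀ z, 0 ≤ π z) (hsum : ∑ z, π z = 1)
    (hX : ∀ x, 0 < margX π x) (hY : ∀ y, 0 < margY π y)
    (ε : ℝ) (hε0 : 0 ≤ ε) (hε1 : ε < 1 / 2)
    (hcorr : ∀ y x, |condX π y x / margX π x - 1| ≤ ε)
    (f : X × Y → ℝ) :
    pvar π f ≤ (1 + ε / (1 - 2 * ε)) *
      ((∑ y, margY π y * pvar (condX π y) (fun x => f (x, y))) +
       (∑ x, margX π x * pvar (condY π x) (fun y => f (x, y)))) :=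
  var_factorization_weak_correlation_general π hnn hsum hX hY ε hε0 hε1 hcorr f

end
end

section
/- Let C ≥ 1 be a real. The joint distribution π satisfies {{X,Z},{Y,Z}}-factorization of entropy with constant C (i.e., Ent f ≤ C(E[Ent_{XZ} f] + E[Ent_{YZ} f]) for every f : 𝒳 × 𝒴 × 𝒵 → ℝ≥0) if and only if the marginal distribution π_{XY} satisfies approximate tensorization of entropy with constant C (i.e., Ent_{π_{XY}} g ≤ C(E_{XY}[Ent_X g] + E_{XY}[Ent_Y g]) for every g : 𝒳 × 𝒴 → ℝ≥0). -/
open scoped BigOperators Classical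

noncomputable section

/-- Entropy of `f` under the density `p` (with the convention `0 log 0 = 0`,
which is automatic since `Real.log 0 = 0`). -/
def pent {α : Type*} [Fintype α] (p f : α → ℝ) : ℝ :=
  pmean p (fun a => f a * Real.log (f a)) - pmean p f * Real.log (pmean p f)

variable {X Y Z : Type*} [Fintype X] [Fintype Y] [Fintype Z]

/-- Marginal of a distribution on `X × Y × Z` on the `(X, Y)` coordinates. -/
def margXY (π : X × Y × Z → ℝ) : X × Y → ℝ := fun p => ∑ z, π (p.1, p.2, z)

/-- Marginal on the `X` coordinate. -/
def margX3 (π : X × Y × Z → ℝ) : X → ℝ := fun x => ∑ y, ∑ z, π (x, y, z)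

/-- Marginal on the `Y` coordinate. -/
def margY3 (π : X × Y × Z → ℝ) : Y → ℝ := fun y => ∑ x, ∑ z, π (x, y, z)

/-- Conditional law of `(X, Z)` given `Y = y`. -/
def condXZ (π : X × Y × Z → ℝ) (y : Y) : X × Z → ℝ :=
  fun p => π (p.1, y, p.2) / margY3 π y

/-- Conditional law of `(Y, Z)` given `X = x`. -/
def condYZ (π : X × Y × Z → ℝ) (x : X) : Y × Z → ℝ :=
  fun p => π (x, p.1, p.2) / margX3 π x

/-- Conditional law of `X` given `Y = y` (under the marginal `π_{XY}`). -/
def condXgY (π : X × Y × Z → ℝ) (y : Y) : X → ℝ :=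
  fun x => margXY π (x, y) / margY3 π y

/-- Conditional law of `Y` given `X = x` (under the marginal `π_{XY}`). -/
def condYgX (π : X × Y × Z → ℝ) (x : X) : Y → ℝ :=
  fun y => margXY π (x, y) / margX3 π x

/-! ### Auxiliary lemmas -/

lemma pent_nonneg {α : Type*} [Fintype α] (p f : α → ℝ)
    (hp : ∀ a, 0 ≤ p a) (hs : ∑ a, p a = 1) (hf : ∀ a, 0 ≤ f a) : 0 ≤ pent p f := by
  have h := Real.convexOn_mul_log.map_sum_le (t := Finset.univ) (w := p) (p := f)
    (fun i _ => hp i) hs (fun i _ => hf i)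
  simp only [smul_eq_mul] at h
  have h2 : pmean p f = ∑ i, p i • f i := by simp [pmean]
  simp only [pent, pmean, h2, sub_nonneg]
  simpa [smul_eq_mul] using h

lemma pmean_fst {α β : Type*} [Fintype α] [Fintype β] (q : α × β → ℝ) (h : α → ℝ) :
    pmean q (fun p => h p.1) = pmean (fun a => ∑ b, q (a, b)) h := by
  simp [pmean, Fintype.sum_prod_type, Finset.sum_mul]

lemma pent_fst {α β : Type*} [Fintype α] [Fintype β] (q : α × β → ℝ) (h : α → ℝ) :
    pent q (fun p => h p.1) = pent (fun a => ∑ b, q (a, b)) h := by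
  unfold pent
  rw [pmean_fst q h, pmean_fst q (fun a => h a * Real.log (h a))]

/-- Chain rule for entropy, unnormalized form. -/
lemma pent_chain {α β : Type*} [Fintype α] [Fintype β]
    (p : α → β → ℝ) (hp : ∀ a b, 0 ≤ p a b) (f : α → β → ℝ) :
    (∑ a, (∑ b, p a b) * pent (fun b => p a b / ∑ b', p a b') (f a))
      + pent (fun a => ∑ b, p a b) (fun a => (∑ b, p a b * f a b) / ∑ b', p a b')
    = (∑ a, ∑ b, p a b * (f a b * Real.log (f a b)))
      - (∑ a, ∑ b, p a b * f a b) * Real.log (∑ a, ∑ b, p a b * f a b) := by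
  set m : α → ℝ := fun a => ∑ b, p a b with hm
  set S : α → ℝ := fun a => ∑ b, p a b * f a b with hS
  set T : α → ℝ := fun a => ∑ b, p a b * (f a b * Real.log (f a b)) with hT
  have hmz : ∀ a, m a = 0 → (∀ b, p a b = 0) := by
    intro a ha b
    have := (Finset.sum_eq_zero_iff_of_nonneg (fun b _ => hp a b)).mp ha
    exact this b (Finset.mem_univ b)
  have h1 : ∀ a, m a * pent (fun b => p a b / m a) (f a)
      = T a - S a * Real.log (S a / m a) := by
    intro a
    by_cases ha : m a = 0
    · have hS0 : S a = 0 := by simp [hS, fun b => hmz a ha b]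
      have hT0 : T a = 0 := by simp [hT, fun b => hmz a ha b]
      simp [ha, hS0, hT0]
    · have hmean : pmean (fun b => p a b / m a) (f a) = S a / m a := by
        simp [pmean, div_mul_eq_mul_div, ← Finset.sum_div, hS]
      have hmean2 : pmean (fun b => p a b / m a) (fun b => f a b * Real.log (f a b))
          = T a / m a := by
        simp [pmean, div_mul_eq_mul_div, ← Finset.sum_div, hT]
      rw [pent, hmean, hmean2]
      field_simp
  have h2 : ∀ a, m a * ((S a / m a) * Real.log (S a / m a)) = S a * Real.log (S a / m a) := by
    intro a
    by_cases ha : m a = 0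
    · have hS0 : S a = 0 := by simp [hS, fun b => hmz a ha b]
      simp [ha, hS0]
    · rw [← mul_assoc, mul_div_cancel₀ _ ha]
  have h3 : ∀ a, m a * (S a / m a) = S a := by
    intro a
    by_cases ha : m a = 0
    · have hS0 : S a = 0 := by simp [hS, fun b => hmz a ha b]
      simp [ha, hS0]
    · exact mul_div_cancel₀ _ ha
  have e1 : (∑ a, m a * pent (fun b => p a b / m a) (f a))
      = ∑ a, (T a - S a * Real.log (S a / m a)) := Finset.sum_congr rfl (fun a _ => h1 a)
  have e2 : pent m (fun a => S a / m a)
      = (∑ a, S a * Real.log (S a / m a)) - (∑ a, S a) * Real.log (∑ a, S a) := by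
    rw [pent]
    have hh : pmean m (fun a => S a / m a) = ∑ a, S a := by
      simp only [pmean]; exact Finset.sum_congr rfl (fun a _ => h3 a)
    rw [hh]
    congr 1
    simp only [pmean]
    exact Finset.sum_congr rfl (fun a _ => h2 a)
  calc (∑ a, m a * pent (fun b => p a b / m a) (f a)) + pent m (fun a => S a / m a)
      = (∑ a, (T a - S a * Real.log (S a / m a)))
        + ((∑ a, S a * Real.log (S a / m a)) - (∑ a, S a) * Real.log (∑ a, S a)) := by
        rw [e1, e2]
    _ = (∑ a, T a) - (∑ a, S a) * Real.log (∑ a, S a) := by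
        rw [Finset.sum_sub_distrib]; ring

/-- Conditional law of `Z` given `(X, Y) = (x, y)`. -/
def condZ (π : X × Y × Z → ℝ) (x : X) (y : Y) : Z → ℝ :=
  fun z => π (x, y, z) / margXY π (x, y)

/-- Conditional expectation of `f` given `(X, Y)`. -/
def gcond (π f : X × Y × Z → ℝ) : X × Y → ℝ :=
  fun a => (∑ z, π (a.1, a.2, z) * f (a.1, a.2, z)) / margXY π a

/-- Conditional entropy of `f` given `(X, Y) = (x, y)`. -/
def entZ (π f : X × Y × Z → ℝ) : X → Y → ℝ :=
  fun x y => pent (condZ π x y) (fun z => f (x, y, z))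

lemma entZ_nonneg (π f : X × Y × Z → ℝ) (hnn : ∀ w, 0 ≤ π w) (hf : ∀ w, 0 ≤ f w)
    (x : X) (y : Y) : 0 ≤ entZ π f x y := by
  by_cases hM : margXY π (x, y) = 0
  · simp [entZ, condZ, hM, pent, pmean]
  · refine pent_nonneg (condZ π x y) (fun z => f (x, y, z))
      (fun z => div_nonneg (hnn _) (Finset.sum_nonneg fun z _ => hnn _)) ?_ (fun z => hf _)
    show (∑ z, π (x, y, z) / margXY π (x, y)) = 1
    rw [← Finset.sum_div]
    exact div_self hM

lemma decompI (π f : X × Y × Z → ℝ) (hnn : ∀ w, 0 ≤ π w) :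
    pent π f = (∑ a : X × Y, margXY π a * entZ π f a.1 a.2)
      + pent (margXY π) (gcond π f) := by
  have key := pent_chain (fun (a : X × Y) z => π (a.1, a.2, z)) (fun a z => hnn _)
      (fun (a : X × Y) z => f (a.1, a.2, z))
  have h1 : pent π f
      = (∑ a : X × Y, ∑ z, π (a.1, a.2, z) * (f (a.1, a.2, z) * Real.log (f (a.1, a.2, z))))
        - (∑ a : X × Y, ∑ z, π (a.1, a.2, z) * f (a.1, a.2, z))
          * Real.log (∑ a : X × Y, ∑ z, π (a.1, a.2, z) * f (a.1, a.2, z)) := by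
    simp [pent, pmean, Fintype.sum_prod_type]
  rw [h1, ← key]
  rfl

lemma decompII (π f : X × Y × Z → ℝ) (hnn : ∀ w, 0 ≤ π w) (y : Y) :
    margY3 π y * pent (condXZ π y) (fun p => f (p.1, y, p.2))
    = (∑ x, margXY π (x, y) * entZ π f x y)
      + margY3 π y * pent (condXgY π y) (fun x => gcond π f (x, y)) := by
  have hmnn : 0 ≤ margY3 π y := Finset.sum_nonneg fun x _ => Finset.sum_nonneg fun z _ => hnn _
  by_cases hy : margY3 π y = 0
  · have hπ : ∀ x z, π (x, y, z) = 0 := by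
      intro x z
      have h1 := (Finset.sum_eq_zero_iff_of_nonneg
        (fun x _ => Finset.sum_nonneg fun z _ => hnn (x, y, z))).mp hy x (Finset.mem_univ x)
      exact (Finset.sum_eq_zero_iff_of_nonneg (fun z _ => hnn (x, y, z))).mp h1 z
        (Finset.mem_univ z)
    have hM : ∀ x, margXY π (x, y) = 0 := by intro x; simp [margXY, hπ]
    simp [hy, hM]
  · have key := pent_chain (fun x z => π (x, y, z) / margY3 π y)
      (fun x z => div_nonneg (hnn _) hmnn) (fun x z => f (x, y, z))
    have hsum : ∀ x : X, (∑ z, π (x, y, z) / margY3 π y) = condXgY π y x := by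
      intro x; simp [condXgY, margXY, Finset.sum_div]
    simp only [hsum] at key
    have hdens : ∀ (x : X) (z : Z),
        π (x, y, z) / margY3 π y / condXgY π y x = condZ π x y z := by
      intro x z
      by_cases hM : margXY π (x, y) = 0
      · have hM' : ∑ z, π (x, y, z) = 0 := hM
        have hπ0 : π (x, y, z) = 0 :=
          (Finset.sum_eq_zero_iff_of_nonneg (fun z _ => hnn (x, y, z))).mp hM' z
            (Finset.mem_univ z)
        simp [condZ, condXgY, hπ0]
      · simp only [condZ, condXgY]
        field_simp
    have hmean : ∀ x : X,
        (∑ z, π (x, y, z) / margY3 π y * f (x, y, z)) / condXgY π y x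
          = gcond π f (x, y) := by
      intro x
      by_cases hM : margXY π (x, y) = 0
      · have hM' : ∑ z, π (x, y, z) = 0 := hM
        have hπ0 : ∀ z, π (x, y, z) = 0 := fun z =>
          (Finset.sum_eq_zero_iff_of_nonneg (fun z _ => hnn (x, y, z))).mp hM' z
            (Finset.mem_univ z)
        simp [gcond, hπ0, hM]
      · have h1 : (∑ z, π (x, y, z) / margY3 π y * f (x, y, z))
            = (∑ z, π (x, y, z) * f (x, y, z)) / margY3 π y := by
          rw [Finset.sum_div]
          exact Finset.sum_congr rfl fun z _ => by rw [div_mul_eq_mul_div]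
        rw [h1]
        simp only [condXgY, gcond]
        field_simp
    simp only [hdens, hmean] at key
    have hpent : pent (condXZ π y) (fun p => f (p.1, y, p.2))
        = (∑ x, ∑ z, π (x, y, z) / margY3 π y * (f (x, y, z) * Real.log (f (x, y, z))))
          - (∑ x, ∑ z, π (x, y, z) / margY3 π y * f (x, y, z))
            * Real.log (∑ x, ∑ z, π (x, y, z) / margY3 π y * f (x, y, z)) := by
      simp [pent, pmean, condXZ, Fintype.sum_prod_type]
    rw [hpent, ← key, mul_add]
    congr 1
    rw [Finset.mul_sum]
    refine Finset.sum_congr rfl fun x _ => ?_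
    rw [← mul_assoc]
    have : margY3 π y * condXgY π y x = margXY π (x, y) := by
      simp only [condXgY]
      rw [mul_comm, div_mul_cancel₀ _ hy]
    rw [this]
    rfl

lemma decompIII (π f : X × Y × Z → ℝ) (hnn : ∀ w, 0 ≤ π w) (x : X) :
    margX3 π x * pent (condYZ π x) (fun p => f (x, p.1, p.2))
    = (∑ y, margXY π (x, y) * entZ π f x y)
      + margX3 π x * pent (condYgX π x) (fun y => gcond π f (x, y)) := by
  have hmnn : 0 ≤ margX3 π x := Finset.sum_nonneg fun y _ => Finset.sum_nonneg fun z _ => hnn _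
  by_cases hx : margX3 π x = 0
  · have hπ : ∀ y z, π (x, y, z) = 0 := by
      intro y z
      have h1 := (Finset.sum_eq_zero_iff_of_nonneg
        (fun y _ => Finset.sum_nonneg fun z _ => hnn (x, y, z))).mp hx y (Finset.mem_univ y)
      exact (Finset.sum_eq_zero_iff_of_nonneg (fun z _ => hnn (x, y, z))).mp h1 z
        (Finset.mem_univ z)
    have hM : ∀ y, margXY π (x, y) = 0 := by intro y; simp [margXY, hπ]
    simp [hx, hM]
  · have key := pent_chain (fun y z => π (x, y, z) / margX3 π x)
      (fun y z => div_nonneg (hnn _) hmnn) (fun y z => f (x, y, z))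
    have hsum : ∀ y : Y, (∑ z, π (x, y, z) / margX3 π x) = condYgX π x y := by
      intro y; simp [condYgX, margXY, Finset.sum_div]
    simp only [hsum] at key
    have hdens : ∀ (y : Y) (z : Z),
        π (x, y, z) / margX3 π x / condYgX π x y = condZ π x y z := by
      intro y z
      by_cases hM : margXY π (x, y) = 0
      · have hM' : ∑ z, π (x, y, z) = 0 := hM
        have hπ0 : π (x, y, z) = 0 :=
          (Finset.sum_eq_zero_iff_of_nonneg (fun z _ => hnn (x, y, z))).mp hM' z
            (Finset.mem_univ z)
        simp [condZ, condYgX, hπ0]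
      · simp only [condZ, condYgX]
        field_simp
    have hmean : ∀ y : Y,
        (∑ z, π (x, y, z) / margX3 π x * f (x, y, z)) / condYgX π x y
          = gcond π f (x, y) := by
      intro y
      by_cases hM : margXY π (x, y) = 0
      · have hM' : ∑ z, π (x, y, z) = 0 := hM
        have hπ0 : ∀ z, π (x, y, z) = 0 := fun z =>
          (Finset.sum_eq_zero_iff_of_nonneg (fun z _ => hnn (x, y, z))).mp hM' z
            (Finset.mem_univ z)
        simp [gcond, hπ0, hM]
      · have h1 : (∑ z, π (x, y, z) / margX3 π x * f (x, y, z))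
            = (∑ z, π (x, y, z) * f (x, y, z)) / margX3 π x := by
          rw [Finset.sum_div]
          exact Finset.sum_congr rfl fun z _ => by rw [div_mul_eq_mul_div]
        rw [h1]
        simp only [condYgX, gcond]
        field_simp
    simp only [hdens, hmean] at key
    have hpent : pent (condYZ π x) (fun p => f (x, p.1, p.2))
        = (∑ y, ∑ z, π (x, y, z) / margX3 π x * (f (x, y, z) * Real.log (f (x, y, z))))
          - (∑ y, ∑ z, π (x, y, z) / margX3 π x * f (x, y, z))
            * Real.log (∑ y, ∑ z, π (x, y, z) / margX3 π x * f (x, y, z)) := by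
      simp [pent, pmean, condYZ, Fintype.sum_prod_type]
    rw [hpent, ← key, mul_add]
    congr 1
    rw [Finset.mul_sum]
    refine Finset.sum_congr rfl fun y _ => ?_
    rw [← mul_assoc]
    have : margX3 π x * condYgX π x y = margXY π (x, y) := by
      simp only [condYgX]
      rw [mul_comm, div_mul_cancel₀ _ hx]
    rw [this]
    rfl

lemma pent_12 (π : X × Y × Z → ℝ) (h : X × Y → ℝ) :
    pent π (fun w => h (w.1, w.2.1)) = pent (margXY π) h := by
  simp [pent, pmean, margXY, Fintype.sum_prod_type, Finset.sum_mul]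

/-- **Equivalence of overlapping-block factorization and marginal tensorization (entropy).** -/
theorem ent_block_factorization_iff_marginal_tensorization
    {X Y Z : Type*} [Fintype X] [Fintype Y] [Fintype Z]
    [Nonempty X] [Nonempty Y] [Nonempty Z]
    (π : X × Y × Z → ℝ) (hnn : ∀ w, 0 ≤ π w) (hsum : ∑ w, π w = 1)
    (C : ℝ) (hC : 1 ≤ C) :
    (∀ f : X × Y × Z → ℝ, (∀ w, 0 ≤ f w) →
        pent π f ≤ C *
          ((∑ y, margY3 π y * pent (condXZ π y) (fun p => f (p.1, y, p.2))) +
           (∑ x, margX3 π x * pent (condYZ π x) (fun p => f (x, p.1, p.2))))) ↔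
    (∀ g : X × Y → ℝ, (∀ w, 0 ≤ g w) →
        pent (margXY π) g ≤ C *
          ((∑ y, margY3 π y * pent (condXgY π y) (fun x => g (x, y))) +
           (∑ x, margX3 π x * pent (condYgX π x) (fun y => g (x, y))))) := by
  constructor
  · intro hfac g hg
    have key := hfac (fun w => g (w.1, w.2.1)) (fun w => hg _)
    have e1 : pent π (fun w => g (w.1, w.2.1)) = pent (margXY π) g := pent_12 π g
    have e2 : ∀ y : Y, pent (condXZ π y) (fun p : X × Z => g (p.1, y))
        = pent (condXgY π y) (fun x => g (x, y)) := by
      intro y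
      rw [pent_fst (condXZ π y) (fun x => g (x, y))]
      congr 1
      funext x
      simp [condXZ, condXgY, margXY, Finset.sum_div]
    have e3 : ∀ x : X, pent (condYZ π x) (fun p : Y × Z => g (x, p.1))
        = pent (condYgX π x) (fun y => g (x, y)) := by
      intro x
      rw [pent_fst (condYZ π x) (fun y => g (x, y))]
      congr 1
      funext y
      simp [condYZ, condYgX, margXY, Finset.sum_div]
    simp only [e1, e2, e3] at key
    exact key
  · intro hg f hf
    have hGnn : ∀ a, 0 ≤ gcond π f a := fun a =>
      div_nonneg (Finset.sum_nonneg fun z _ => mul_nonneg (hnn _) (hf _))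
        (Finset.sum_nonneg fun z _ => hnn _)
    have hTnn : 0 ≤ ∑ a : X × Y, margXY π a * entZ π f a.1 a.2 :=
      Finset.sum_nonneg fun a _ =>
        mul_nonneg (Finset.sum_nonneg fun z _ => hnn _) (entZ_nonneg π f hnn hf a.1 a.2)
    have hSII : (∑ y, margY3 π y * pent (condXZ π y) (fun p => f (p.1, y, p.2)))
        = (∑ a : X × Y, margXY π a * entZ π f a.1 a.2)
          + ∑ y, margY3 π y * pent (condXgY π y) (fun x => gcond π f (x, y)) := by
      rw [Finset.sum_congr rfl (fun y _ => decompII π f hnn y), Finset.sum_add_distrib]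
      congr 1
      rw [Fintype.sum_prod_type]
      exact Finset.sum_comm
    have hSIII : (∑ x, margX3 π x * pent (condYZ π x) (fun p => f (x, p.1, p.2)))
        = (∑ a : X × Y, margXY π a * entZ π f a.1 a.2)
          + ∑ x, margX3 π x * pent (condYgX π x) (fun y => gcond π f (x, y)) := by
      rw [Finset.sum_congr rfl (fun x _ => decompIII π f hnn x), Finset.sum_add_distrib]
      congr 1
      rw [Fintype.sum_prod_type]
    have hmarg := hg (gcond π f) hGnn
    rw [hSII, hSIII, decompI π f hnn]
    nlinarith [hmarg, hTnn, hC, mul_nonneg (by linarith : (0:ℝ) ≤ 2 * C - 1) hTnn]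

end
end

section
/- Let G = (V,E) be a graph on n ≥ 10 vertices and let r ≥ 1 be an integer. Then there exists a partition V = V_1 ∪ … ∪ V_m into pairwise disjoint nonempty sets such that: (1) for each i ∈ [m], any two vertices of B(V_i, r) are joined by a path lying inside the induced subgraph G[B(V_i, r)] of length at most 6r log₂ n + 2r (in particular G[B(V_i, r)] is connected with diameter at most 6r log₂ n + 2r); and (2) every vertex v ∈ V lies in at most 2 log₂ n of the sets B(V_i, r). -/
open scoped BigOperators Classical

noncomputable section

/-- The ball of radius `r` around the vertex set `S`: all vertices joined to some
vertex of `S` by a walk of length at most `r` (this is `{v : dist_G(v, S) ≤ r}`). -/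
def gball {V : Type*} [Fintype V] (G : SimpleGraph V) (S : Finset V) (r : ℕ) :
    Finset V :=
  Finset.univ.filter (fun v => ∃ s ∈ S, ∃ w : G.Walk v s, w.length ≤ r)

/-! Clusters are carved greedily, in rounds. Within a round, a cluster is seeded at a vertex `u`
of the current pool `P` and grown by `Z₀ = {u}`, `Zₛ₊₁ = B(Zₛ, 2r) ∩ P` until its size stops
doubling; this happens after `t ≤ log₂ n` steps, so every vertex of `B(Zₜ, r)` reaches `u` inside
`B(Zₜ, r)` by a walk of length at most `r + 2rt`. The cluster is `C = Zₜ`, the annulus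
`Zₜ₊₁ \ C` is deferred to the next round, and `Zₜ₊₁` leaves the pool; hence later clusters of the
same round stay at distance `> 2r` from `C`, and the `r`-balls of one round are disjoint. As the
annulus is smaller than half of `Zₜ₊₁`, each round defers at most half of its pool, so there are at
most `log₂ n + 1` rounds and every vertex lies in at most that many balls. -/

open Finset

namespace Finpartition

variable {α : Type*} [DecidableEq α] {s t : Finset α}

@[simps]
def union (P : Finpartition s) (Q : Finpartition t) (hst : Disjoint s t) :
    Finpartition (s ∪ t) where
  parts := P.parts ∪ Q.parts
  supIndep := by
    rw [Finset.supIndep_iff_pairwiseDisjoint, coe_union, Set.pairwiseDisjoint_union]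
    exact ⟨P.disjoint, Q.disjoint, fun a ha b hb _ => hst.mono (P.le ha) (Q.le hb)⟩
  sup_parts := by rw [sup_union, P.sup_parts, Q.sup_parts]; rfl
  bot_notMem h := (mem_union.1 h).elim P.bot_notMem Q.bot_notMem

end Finpartition

lemma Finset.card_filter_equivFin_symm {α : Type*} (s : Finset α) (p : α → Prop)
    [DecidablePred p] : #{i | p (s.equivFin.symm i)} = #{a ∈ s | p a} := by
  refine card_bij (fun i _ => (s.equivFin.symm i : α)) ?_ ?_ ?_
  · simp
  · intro i _ j _ h; simpa using Subtype.ext h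
  · intro a ha
    obtain ⟨has, hpa⟩ := mem_filter.1 ha
    exact ⟨s.equivFin ⟨a, has⟩, by simpa using hpa, by simp⟩

lemma Set.PairwiseDisjoint.card_filter_mem_le_one {ι α : Type*} {𝒞 : Finset ι}
    {f : ι → Finset α} (h𝒞 : (𝒞 : Set ι).PairwiseDisjoint f) (a : α) [DecidablePred (a ∈ f ·)] :
    #{C ∈ 𝒞 | a ∈ f C} ≤ 1 :=
  card_le_one.2 fun _ hC _ hC' =>
    let ⟨hC, haC⟩ := mem_filter.1 hC
    let ⟨hC', haC'⟩ := mem_filter.1 hC'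
    h𝒞.elim_finset hC hC' a haC haC'

lemma exists_two_pow_le_and_lt_two_mul (f : ℕ → ℕ) (h₀ : 1 ≤ f 0) {N : ℕ} (hN : ∀ t, f t ≤ N) :
    ∃ t, 2 ^ t ≤ f t ∧ f (t + 1) < 2 * f t := by
  by_contra! hdoubling
  have hgrowth : ∀ t, 2 ^ t ≤ f t := by
    intro t
    induction t with
    | zero => simpa using h₀
    | succ t ih => calc 2 ^ (t + 1) = 2 * 2 ^ t := by ring
        _ ≤ 2 * f t := by omega
        _ ≤ f (t + 1) := hdoubling t ih
  exact (Nat.lt_two_pow_self.trans_le ((hgrowth N).trans (hN N))).false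

namespace SimpleGraph

variable {V : Type*} (G : SimpleGraph V)

def InducedDiamLE (S : Finset V) (d : ℕ) : Prop :=
  ∀ x ∈ S, ∀ y ∈ S, ∃ w : G.Walk x y, w.length ≤ d ∧ ∀ p ∈ w.support, p ∈ S

variable {G}

lemma InducedDiamLE.mono {S : Finset V} {d d' : ℕ} (h : G.InducedDiamLE S d) (hd : d ≤ d') :
    G.InducedDiamLE S d' := fun x hx y hy =>
  let ⟨w, hw, hwS⟩ := h x hx y hy
  ⟨w, hw.trans hd, hwS⟩

lemma inducedDiamLE_two_mul_of_walk_to {S : Finset V} {u : V} {ρ : ℕ}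
    (h : ∀ x ∈ S, ∃ w : G.Walk x u, w.length ≤ ρ ∧ ∀ p ∈ w.support, p ∈ S) :
    G.InducedDiamLE S (2 * ρ) := by
  intro x hx y hy
  obtain ⟨wx, hwx, hwxS⟩ := h x hx
  obtain ⟨wy, hwy, hwyS⟩ := h y hy
  refine ⟨wx.append wy.reverse, by rw [Walk.length_append, Walk.length_reverse]; omega, ?_⟩
  intro p hp
  rw [Walk.mem_support_append_iff, Walk.support_reverse, List.mem_reverse] at hp
  exact hp.elim (hwxS p) (hwyS p)

variable [Fintype V]

@[simp]
lemma mem_gball {S : Finset V} {k : ℕ} {v : V} :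
    v ∈ gball G S k ↔ ∃ s ∈ S, ∃ w : G.Walk v s, w.length ≤ k := by
  simp [gball]

variable (G)

lemma subset_gball (S : Finset V) (k : ℕ) : S ⊆ gball G S k :=
  fun s hs => mem_gball.2 ⟨s, hs, .nil, by simp⟩

lemma gball_mono {S T : Finset V} (h : S ⊆ T) (k : ℕ) : gball G S k ⊆ gball G T k := by
  intro v hv
  obtain ⟨s, hs, w, hw⟩ := mem_gball.1 hv
  exact mem_gball.2 ⟨s, h hs, w, hw⟩

variable {G}

lemma Walk.mem_gball_of_mem_support {S : Finset V} {k : ℕ} {a b p : V} (w : G.Walk a b)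
    (hb : b ∈ S) (hw : w.length ≤ k) (hp : p ∈ w.support) : p ∈ gball G S k := by
  obtain ⟨q, q', rfl⟩ := Walk.mem_support_iff_exists_append.1 hp
  rw [Walk.length_append] at hw
  exact mem_gball.2 ⟨b, hb, q', by omega⟩

lemma Walk.mem_gball_of_mem_support_of_length_le_two_mul {S : Finset V} {r : ℕ} {a b p : V}
    (w : G.Walk a b) (ha : a ∈ S) (hb : b ∈ S) (hw : w.length ≤ 2 * r) (hp : p ∈ w.support) :
    p ∈ gball G S r := by
  obtain ⟨q, q', rfl⟩ := Walk.mem_support_iff_exists_append.1 hp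
  rw [Walk.length_append] at hw
  by_cases hq' : q'.length ≤ r
  · exact mem_gball.2 ⟨b, hb, q', hq'⟩
  · exact mem_gball.2 ⟨a, ha, q.reverse, by rw [Walk.length_reverse]; omega⟩

lemma disjoint_gball_of_disjoint_gball_two_mul {S T : Finset V} {r : ℕ}
    (h : Disjoint (gball G S (2 * r)) T) : Disjoint (gball G S r) (gball G T r) := by
  refine Finset.disjoint_left.2 fun v hvS hvT => ?_
  obtain ⟨s, hs, ws, hws⟩ := mem_gball.1 hvS
  obtain ⟨t, ht, wt, hwt⟩ := mem_gball.1 hvT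
  refine Finset.disjoint_left.1 h (mem_gball.2 ⟨s, hs, wt.reverse.append ws, ?_⟩) ht
  rw [Walk.length_append, Walk.length_reverse]
  omega

variable [DecidableEq V]

def ballChain (P : Finset V) (u : V) (r : ℕ) : ℕ → Finset V
  | 0 => {u}
  | s + 1 => gball G (ballChain P u r s) (2 * r) ∩ P

variable {P : Finset V} {u : V} {r : ℕ}

lemma ballChain_subset (hu : u ∈ P) : ∀ s, G.ballChain P u r s ⊆ P
  | 0 => singleton_subset_iff.2 hu
  | _ + 1 => inter_subset_right

lemma ballChain_subset_succ (hu : u ∈ P) (s : ℕ) :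
    G.ballChain P u r s ⊆ G.ballChain P u r (s + 1) :=
  subset_inter (subset_gball G _ _) (G.ballChain_subset hu s)

lemma exists_walk_of_mem_ballChain (hu : u ∈ P) (s : ℕ) :
    ∀ z ∈ G.ballChain P u r s, ∃ w : G.Walk z u, w.length ≤ 2 * r * s ∧
      ∀ p ∈ w.support, p ∈ gball G (G.ballChain P u r s) r := by
  induction s with
  | zero =>
    intro z hz
    obtain rfl : z = u := mem_singleton.1 hz
    exact ⟨.nil, by simp, fun p hp => subset_gball G _ _ (by simpa [ballChain] using hp)⟩
  | succ s ih =>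
    intro z hz
    obtain ⟨z', hz', w₁, hw₁⟩ := mem_gball.1 (mem_inter.1 hz).1
    obtain ⟨w₂, hw₂, hw₂S⟩ := ih z' hz'
    refine ⟨w₁.append w₂, by rw [Walk.length_append]; linarith, fun p hp => ?_⟩
    rcases (Walk.mem_support_append_iff _ _).1 hp with hp | hp
    · exact w₁.mem_gball_of_mem_support_of_length_le_two_mul hz
        (G.ballChain_subset_succ hu s hz') hw₁ hp
    · exact gball_mono G (G.ballChain_subset_succ hu s) r (hw₂S p hp)

lemma inducedDiamLE_gball_ballChain (hu : u ∈ P) (s : ℕ) :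
    G.InducedDiamLE (gball G (G.ballChain P u r s) r) (2 * (r + 2 * r * s)) := by
  refine inducedDiamLE_two_mul_of_walk_to (u := u) fun x hx => ?_
  obtain ⟨z, hz, w₁, hw₁⟩ := mem_gball.1 hx
  obtain ⟨w₂, hw₂, hw₂S⟩ := G.exists_walk_of_mem_ballChain hu s z hz
  refine ⟨w₁.append w₂, by rw [Walk.length_append]; omega, fun p hp => ?_⟩
  rcases (Walk.mem_support_append_iff _ _).1 hp with hp | hp
  · exact w₁.mem_gball_of_mem_support hz hw₁ hp
  · exact hw₂S p hp

variable (r) in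
lemma exists_cluster (hP : P.Nonempty) :
    ∃ C ⊆ P, C.Nonempty ∧
      G.InducedDiamLE (gball G C r) (2 * r + 4 * r * Nat.log 2 (Fintype.card V)) ∧
      #(gball G C (2 * r) ∩ P) < 2 * #C := by
  obtain ⟨u, hu⟩ := hP
  obtain ⟨t, ht, hstop⟩ := exists_two_pow_le_and_lt_two_mul (fun s => #(G.ballChain P u r s))
    (by simp [ballChain]) (fun _ => card_le_univ _)
  have htlog : t ≤ Nat.log 2 (Fintype.card V) :=
    Nat.le_log_of_pow_le one_lt_two (ht.trans (card_le_univ _))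
  refine ⟨G.ballChain P u r t, G.ballChain_subset hu t, card_pos.1 (by omega),
    (G.inducedDiamLE_gball_ballChain hu t).mono ?_, hstop⟩
  have := Nat.mul_le_mul_left (4 * r) htlog
  linarith

variable {p : Finset V → Prop}

lemma exists_round
    (hcarve : ∀ P : Finset V, P.Nonempty →
      ∃ C ⊆ P, C.Nonempty ∧ p C ∧ #(gball G C (2 * r) ∩ P) < 2 * #C)
    (P : Finset V) :
    ∃ D ⊆ P, 2 * #D ≤ #P ∧ ∃ 𝒬 : Finpartition (P \ D),
      (∀ C ∈ 𝒬.parts, p C) ∧ (𝒬.parts : Set (Finset V)).PairwiseDisjoint (gball G · r) := by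
  induction P using Finset.strongInduction with
  | H P ih =>
  rcases P.eq_empty_or_nonempty with rfl | hP
  · exact ⟨∅, empty_subset _, by simp, ⊥, by simp, by simp⟩
  obtain ⟨C, hCP, hC, hpC, hgrowth⟩ := hcarve P hP
  set R := gball G C (2 * r) ∩ P
  have hCR : C ⊆ R := subset_inter (subset_gball G C _) hCP
  have hRP : R ⊆ P := inter_subset_right
  obtain ⟨D, hDP, hDcard, 𝒬, hp𝒬, hdisj𝒬⟩ := ih (P \ R) (sdiff_ssubset hRP (hC.mono hCR))
  have hfar : Disjoint (gball G C (2 * r)) ((P \ R) \ D) := by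
    refine Finset.disjoint_left.2 fun x hx hxQ => ?_
    simp only [mem_sdiff] at hxQ
    exact hxQ.1.2 (mem_inter.2 ⟨hx, hxQ.1.1⟩)
  have hsplit : (P \ R) \ D ⊔ C = P \ (D ∪ (R \ C)) := by
    ext x
    grind
  refine ⟨D ∪ (R \ C), union_subset (hDP.trans sdiff_subset) (sdiff_subset.trans hRP), ?_,
    𝒬.extend hC.ne_empty (hfar.mono_left (subset_gball G C _)).symm hsplit, ?_, ?_⟩
  · have := card_sdiff_of_subset hRP
    have := card_sdiff_of_subset hCR
    have := card_union_le D (R \ C)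
    have := card_le_card hCR
    have := card_le_card hRP
    omega
  · simpa [hpC] using hp𝒬
  · rw [Finpartition.extend_parts, coe_insert]
    exact hdisj𝒬.insert fun C' hC' _ =>
      disjoint_gball_of_disjoint_gball_two_mul (hfar.mono_right (𝒬.le hC'))

lemma exists_finpartition
    (hcarve : ∀ P : Finset V, P.Nonempty →
      ∃ C ⊆ P, C.Nonempty ∧ p C ∧ #(gball G C (2 * r) ∩ P) < 2 * #C)
    (k : ℕ) :
    ∀ P : Finset V, #P < 2 ^ k → ∃ 𝒞 : Finpartition P,
      (∀ C ∈ 𝒞.parts, p C) ∧ ∀ v, #{C ∈ 𝒞.parts | v ∈ gball G C r} ≤ k := by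
  induction k with
  | zero =>
    intro P hP
    obtain rfl : P = ∅ := card_eq_zero.1 (by simpa using hP)
    exact ⟨⊥, by simp, by simp⟩
  | succ k ih =>
    intro P hP
    obtain ⟨D, hDP, hDcard, 𝒬, hp𝒬, hdisj𝒬⟩ := G.exists_round hcarve P
    obtain ⟨𝒟, hp𝒟, hcount𝒟⟩ := ih D (by rw [pow_succ] at hP; omega)
    refine ⟨(𝒬.union 𝒟 sdiff_disjoint).copy (sdiff_union_of_subset hDP), ?_, fun v => ?_⟩
    · simpa [or_imp, forall_and] using ⟨hp𝒬, hp𝒟⟩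
    · calc #{C ∈ 𝒬.parts ∪ 𝒟.parts | v ∈ gball G C r}
          ≤ #{C ∈ 𝒬.parts | v ∈ gball G C r} + #{C ∈ 𝒟.parts | v ∈ gball G C r} := by
            rw [filter_union]; exact card_union_le _ _
        _ ≤ 1 + k := add_le_add (hdisj𝒬.card_filter_mem_le_one v) (hcount𝒟 v)
        _ = k + 1 := add_comm 1 k

end SimpleGraph

lemma natLog_add_one_le_two_mul_logb {n : ℕ} (hn : 2 ≤ n) :
    (Nat.log 2 n + 1 : ℝ) ≤ 2 * Real.logb 2 n := by
  have hlog : (Nat.log 2 n : ℝ) ≤ Real.logb 2 n := by exact_mod_cast Real.natLog_le_logb n 2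
  have hone : 1 ≤ Real.logb 2 n := by
    rw [Real.le_logb_iff_rpow_le one_lt_two (by positivity)]
    exact_mod_cast (by simpa using hn : (2 : ℕ) ^ 1 ≤ n)
  linarith

theorem low_diameter_decomposition_general
    {V : Type*} [Fintype V] [DecidableEq V] (G : SimpleGraph V)
    (n : ℕ) (hn : Fintype.card V = n) (hn10 : 10 ≤ n) (r : ℕ) :
    ∃ (m : ℕ) (𝒱 : Fin m → Finset V),
      (∀ i, (𝒱 i).Nonempty) ∧
      (∀ i j, i ≠ j → Disjoint (𝒱 i) (𝒱 j)) ∧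
      (Finset.univ.biUnion 𝒱 = Finset.univ) ∧
      (∀ i, ∀ u ∈ gball G (𝒱 i) r, ∀ v ∈ gball G (𝒱 i) r,
        ∃ w : G.Walk u v, ((w.length : ℝ) ≤ 6 * r * Real.logb 2 n + 2 * r ∧
          ∀ x ∈ w.support, x ∈ gball G (𝒱 i) r)) ∧
      (∀ v : V,
        ((Finset.univ.filter (fun i : Fin m => v ∈ gball G (𝒱 i) r)).card : ℝ) ≤
          2 * Real.logb 2 n) := by
  have hlog := natLog_add_one_le_two_mul_logb (n := n) (by omega)
  obtain ⟨𝒞, hdiam, hoverlap⟩ := G.exists_finpartition (fun _ => G.exists_cluster r)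
    (Nat.log 2 n + 1) univ (by rw [card_univ, hn]; exact Nat.lt_pow_succ_log_self one_lt_two n)
  refine ⟨#𝒞.parts, fun i => 𝒞.parts.equivFin.symm i,
    fun i => 𝒞.nonempty_of_mem_parts (coe_mem _),
    fun i j hij => 𝒞.disjoint (coe_mem _) (coe_mem _) (by simpa [Subtype.ext_iff] using hij),
    eq_univ_of_forall fun v => ?_, fun i x hx y hy => ?_, fun v => ?_⟩
  · obtain ⟨C, hC, hvC⟩ := 𝒞.exists_mem (mem_univ v)
    exact mem_biUnion.2 ⟨𝒞.parts.equivFin ⟨C, hC⟩, mem_univ _, by simpa using hvC⟩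
  · obtain ⟨w, hw, hwS⟩ := hdiam _ (coe_mem _) x hx y hy
    have hnat : (Nat.log 2 n : ℝ) ≤ Real.logb 2 n := by exact_mod_cast Real.natLog_le_logb n 2
    have hw' : (w.length : ℝ) ≤ 2 * r + 4 * r * Nat.log 2 n := by rw [hn] at hw; exact_mod_cast hw
    refine ⟨w, ?_, hwS⟩
    nlinarith [mul_le_mul_of_nonneg_left hnat r.cast_nonneg]
  · rw [card_filter_equivFin_symm 𝒞.parts (v ∈ gball G · r)]
    exact (Nat.cast_le.2 (hoverlap v)).trans (by push_cast; exact hlog)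

/-- **Low-diameter decomposition.** For any graph `G` on `n ≥ 10` vertices and any `r ≥ 1`
there is a partition `V = V₁ ∪ ⋯ ∪ V_m` into nonempty pairwise disjoint sets such that
(1) any two vertices of `B(Vᵢ, r)` are joined by a path inside `G[B(Vᵢ, r)]` of length at
most `6 r log₂ n + 2 r`, and (2) every vertex lies in at most `2 log₂ n` of the balls
`B(Vᵢ, r)`. -/
theorem low_diameter_decomposition
    {V : Type*} [Fintype V] [DecidableEq V] (G : SimpleGraph V)
    (n : ℕ) (hn : Fintype.card V = n) (hn10 : 10 ≤ n) (r : ℕ) (hr : 1 ≤ r) :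
    ∃ (m : ℕ) (𝒱 : Fin m → Finset V),
      (∀ i, (𝒱 i).Nonempty) ∧
      (∀ i j, i ≠ j → Disjoint (𝒱 i) (𝒱 j)) ∧
      (Finset.univ.biUnion 𝒱 = Finset.univ) ∧
      (∀ i, ∀ u ∈ gball G (𝒱 i) r, ∀ v ∈ gball G (𝒱 i) r,
        ∃ w : G.Walk u v, ((w.length : ℝ) ≤ 6 * r * Real.logb 2 n + 2 * r ∧
          ∀ x ∈ w.support, x ∈ gball G (𝒱 i) r)) ∧
      (∀ v : V,
        ((Finset.univ.filter (fun i : Fin m => v ∈ gball G (𝒱 i) r)).card : ℝ) ≤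
          2 * Real.logb 2 n) :=
  low_diameter_decomposition_general G n hn hn10 r
end
end

section
/- Let f : 𝒳 × 𝒴 → ℝ≥0 be a function with E f = 1. Then Ent f ≥ Ent(E_X f) + Ent(E_Y f) − E[(E_X f − 1)(E_Y f − 1)], where E_X f denotes the function y ↦ E_X^y f, E_Y f denotes the function x ↦ E_Y^x f, and Ent(E_X f), Ent(E_Y f), and the expectation of the product are all taken under π. -/
open scoped BigOperators Classical

noncomputable section

/-- Total variation distance between two densities. -/
def ptv {α : Type*} [Fintype α] (p q : α → ℝ) : ℝ := (1 / 2) * ∑ a, |p a - q a|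

private lemma pt_ineq (a b c : ℝ) (ha : 0 ≤ a)
    (hab : 0 < a → 0 < b) (hac : 0 < a → 0 < c) (hbc : 0 ≤ b * c) :
    a * Real.log b + a * Real.log c + a - b * c ≤ a * Real.log a := by
  rcases eq_or_lt_of_le ha with h | h
  · rw [← h]; simpa using hbc
  · have hb := hab h; have hc := hac h
    have hpos : 0 < b * c / a := by positivity
    have hlog := Real.log_le_sub_one_of_pos hpos
    rw [Real.log_div (by positivity) h.ne', Real.log_mul hb.ne' hc.ne'] at hlog
    have h2 := mul_le_mul_of_nonneg_left hlog h.le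
    have h3 : a * (b * c / a) = b * c := by field_simp
    nlinarith

private lemma sumY' {X Y : Type*} [Fintype X] [Fintype Y] (π : X × Y → ℝ) (u : X × Y → ℝ) (w : Y → ℝ) :
    (∑ z : X × Y, π z * (u z * w z.2)) = ∑ y, (∑ x, π (x, y) * u (x, y)) * w y := by
  rw [Fintype.sum_prod_type_right]
  refine Finset.sum_congr rfl fun y _ => ?_
  rw [Finset.sum_mul]; exact Finset.sum_congr rfl fun x _ => by ring

private lemma sumX' {X Y : Type*} [Fintype X] [Fintype Y] (π : X × Y → ℝ) (u : X × Y → ℝ) (w : X → ℝ) :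
    (∑ z : X × Y, π z * (u z * w z.1)) = ∑ x, (∑ y, π (x, y) * u (x, y)) * w x := by
  rw [Fintype.sum_prod_type]
  refine Finset.sum_congr rfl fun x _ => ?_
  rw [Finset.sum_mul]; exact Finset.sum_congr rfl fun y _ => by ring


/-- For `f ≥ 0` with `E f = 1`,
`Ent f ≥ Ent(E_X f) + Ent(E_Y f) − E[(E_X f − 1)(E_Y f − 1)]`,
where `E_X f : y ↦ E_X^y f` and `E_Y f : x ↦ E_Y^x f`, all quantities under `π`. -/
theorem ent_ge_marginal_ents_sub_cov
    {X Y : Type*} [Fintype X] [Fintype Y] [Nonempty X] [Nonempty Y]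
    (π : X × Y → ℝ) (hnn : ∀ z, 0 ≤ π z) (hsum : ∑ z, π z = 1)
    (hX : ∀ x, 0 < margX π x) (hY : ∀ y, 0 < margY π y)
    (f : X × Y → ℝ) (hf : ∀ z, 0 ≤ f z) (hEf : pmean π f = 1) :
    pent π f ≥
      pent π (fun z => pmean (condX π z.2) (fun x => f (x, z.2))) +
      pent π (fun z => pmean (condY π z.1) (fun y => f (z.1, y))) -
      pmean π (fun z =>
        (pmean (condX π z.2) (fun x => f (x, z.2)) - 1) *
        (pmean (condY π z.1) (fun y => f (z.1, y)) - 1)) := by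
  set G : Y → ℝ := fun y => pmean (condX π y) (fun x => f (x, y)) with hGdef
  set H : X → ℝ := fun x => pmean (condY π x) (fun y => f (x, y)) with hHdef
  show pent π f ≥ pent π (fun z => G z.2) + pent π (fun z => H z.1) -
      pmean π (fun z => (G z.2 - 1) * (H z.1 - 1))
  -- basic nonnegativity
  have hGnn : ∀ y, 0 ≤ G y := fun y =>
    Finset.sum_nonneg fun x _ => mul_nonneg (div_nonneg (hnn _) (hY y).le) (hf _)
  have hHnn : ∀ x, 0 ≤ H x := fun x =>
    Finset.sum_nonneg fun y _ => mul_nonneg (div_nonneg (hnn _) (hX x).le) (hf _)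
  -- positivity on the support
  have hGpos : ∀ z : X × Y, 0 < π z → 0 < f z → 0 < G z.2 := by
    rintro ⟨x, y⟩ hπ hfz
    have hterm : 0 < condX π y x * f (x, y) :=
      mul_pos (div_pos hπ (hY y)) hfz
    have hle : condX π y x * f (x, y) ≤ G y :=
      Finset.single_le_sum (f := fun x' => condX π y x' * f (x', y))
        (fun x' _ => mul_nonneg (div_nonneg (hnn _) (hY y).le) (hf _)) (Finset.mem_univ x)
    exact lt_of_lt_of_le hterm hle
  have hHpos : ∀ z : X × Y, 0 < π z → 0 < f z → 0 < H z.1 := by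
    rintro ⟨x, y⟩ hπ hfz
    have hterm : 0 < condY π x y * f (x, y) :=
      mul_pos (div_pos hπ (hX x)) hfz
    have hle : condY π x y * f (x, y) ≤ H x :=
      Finset.single_le_sum (f := fun y' => condY π x y' * f (x, y'))
        (fun y' _ => mul_nonneg (div_nonneg (hnn _) (hX x).le) (hf _)) (Finset.mem_univ y)
    exact lt_of_lt_of_le hterm hle
  -- marginal identities
  have hGmarg : ∀ y, margY π y * G y = ∑ x, π (x, y) * f (x, y) := by
    intro y
    have hy := (hY y).ne'
    simp only [hGdef, pmean, condX, Finset.mul_sum]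
    refine Finset.sum_congr rfl fun x _ => ?_
    field_simp
  have hHmarg : ∀ x, margX π x * H x = ∑ y, π (x, y) * f (x, y) := by
    intro x
    have hx := (hX x).ne'
    simp only [hHdef, pmean, condY, Finset.mul_sum]
    refine Finset.sum_congr rfl fun y _ => ?_
    field_simp
  -- means of G∘snd and H∘fst are 1
  have hfsum : pmean π f = ∑ y, ∑ x, π (x, y) * f (x, y) := by
    rw [pmean, Fintype.sum_prod_type_right]
  have hfsumX : pmean π f = ∑ x, ∑ y, π (x, y) * f (x, y) := by
    rw [pmean, Fintype.sum_prod_type]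
  have hEG1 : pmean π (fun z => G z.2) = 1 := by
    have a2 := sumY' π (fun _ => (1 : ℝ)) (fun y => G y)
    simp only [mul_one, one_mul] at a2
    rw [pmean, a2]
    rw [← hEf, hfsum]
    refine Finset.sum_congr rfl fun y _ => ?_
    rw [← hGmarg y, margY]
  have hEH1 : pmean π (fun z => H z.1) = 1 := by
    have a2 := sumX' π (fun _ => (1 : ℝ)) (fun x => H x)
    simp only [mul_one, one_mul] at a2
    rw [pmean, a2]
    rw [← hEf, hfsumX]
    refine Finset.sum_congr rfl fun x _ => ?_
    rw [← hHmarg x, margX]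
  -- E[f log G] = E[G log G]
  have hEfG : pmean π (fun z => f z * Real.log (G z.2)) =
      pmean π (fun z => G z.2 * Real.log (G z.2)) := by
    rw [pmean, pmean, sumY' π f (fun y => Real.log (G y)),
      sumY' π (fun z => G z.2) (fun y => Real.log (G y))]
    refine Finset.sum_congr rfl fun y _ => ?_
    rw [← hGmarg y]
    congr 1
    show margY π y * G y = (∑ x, π (x, y) * G y)
    rw [← Finset.sum_mul]
    rfl
  have hEfH : pmean π (fun z => f z * Real.log (H z.1)) =
      pmean π (fun z => H z.1 * Real.log (H z.1)) := by
    rw [pmean, pmean, sumX' π f (fun x => Real.log (H x)),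
      sumX' π (fun z => H z.1) (fun x => Real.log (H x))]
    refine Finset.sum_congr rfl fun x _ => ?_
    rw [← hHmarg x]
    congr 1
    show margX π x * H x = (∑ y, π (x, y) * H x)
    rw [← Finset.sum_mul]
    rfl
  -- covariance expansion
  have hC : pmean π (fun z => (G z.2 - 1) * (H z.1 - 1)) =
      pmean π (fun z => G z.2 * H z.1) - 1 := by
    have expand : ∀ z : X × Y, π z * ((G z.2 - 1) * (H z.1 - 1)) =
        π z * (G z.2 * H z.1) - π z * G z.2 - π z * H z.1 + π z := fun z => by ring
    have : pmean π (fun z => (G z.2 - 1) * (H z.1 - 1)) =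
        pmean π (fun z => G z.2 * H z.1) - pmean π (fun z => G z.2) -
          pmean π (fun z => H z.1) + ∑ z, π z := by
      simp only [pmean]
      rw [Finset.sum_congr rfl fun z _ => expand z, Finset.sum_add_distrib,
        Finset.sum_sub_distrib, Finset.sum_sub_distrib]
    rw [this, hEG1, hEH1, hsum]; ring
  -- main pointwise inequality summed
  have hmain : pmean π (fun z => f z * Real.log (G z.2) + f z * Real.log (H z.1)
      + f z - G z.2 * H z.1) ≤ pmean π (fun z => f z * Real.log (f z)) := by
    simp only [pmean]
    refine Finset.sum_le_sum fun z _ => ?_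
    rcases eq_or_lt_of_le (hnn z) with hπ | hπ
    · rw [← hπ]; simp
    · exact mul_le_mul_of_nonneg_left
        (pt_ineq (f z) (G z.2) (H z.1) (hf z) (hGpos z hπ) (hHpos z hπ)
          (mul_nonneg (hGnn _) (hHnn _))) (hnn z)
  have hsplit : pmean π (fun z => f z * Real.log (G z.2) + f z * Real.log (H z.1)
      + f z - G z.2 * H z.1) =
      pmean π (fun z => f z * Real.log (G z.2)) + pmean π (fun z => f z * Real.log (H z.1))
        + pmean π f - pmean π (fun z => G z.2 * H z.1) := by
    simp only [pmean]
    rw [← Finset.sum_add_distrib, ← Finset.sum_add_distrib, ← Finset.sum_sub_distrib]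
    exact Finset.sum_congr rfl fun z _ => by ring
  simp only [ge_iff_le, pent, hEf, hEG1, hEH1, hC, Real.log_one, mul_zero, sub_zero, one_mul]
  linarith [hmain, hsplit, hEfG, hEfH, hEf]


end
end
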